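/- arXiv:2402.06708 — 2 statements merged into one kernel-verified Lean document; each statement's English description precedes it below -/
import Mathlib

section
/- Let n, s be positive integers, let G be a finite group and N a normal subgroup of G with |G:N| = n such that N contains exactly s non-central G-conjugacy classes. Then |G| < n^(2^s + 1) · (s+1) · ∏_{i=0}^{s-1} (s+1-i)^(2^(s-1-i)). -/
/-!
Dividing the class equation of `N` under `G`-conjugation by `|G|` gives
`1/n = 1/|G : N ∩ Z(G)| + ∑ᵢ 1/|C_G(xᵢ)|`, summed over the `s` non-central classes `xᵢ^G ⊆ N`:
a representation of `1/n` by `s + 1` unit fractions. Landau's argument (the smallest of `k` unit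
fractions summing to `a/b` has denominator at most `k b`; remove it and recurse with the
denominator `b` replaced by at most `k b²`) bounds every denominator, in particular
`|G : N ∩ Z(G)| ≤ n^(2^s) ∏ (s+1-i)^(2^(s-1-i))`. On the other hand each `C_G(xᵢ)` contains
`N ∩ Z(G)` properly, so `|xᵢ^G| ≤ |G| / (2 |N ∩ Z(G)|)`; as the non-central classes cover at
least half of `N`, this gives `|N ∩ Z(G)| ≤ s n`, and `|G| = |G : N ∩ Z(G)| |N ∩ Z(G)|`.
-/

def landauBound (k b : ℕ) : ℕ :=
  b ^ 2 ^ k * ∏ i ∈ Finset.range k, (k + 1 - i) ^ 2 ^ (k - 1 - i)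

lemma landauBound_zero (b : ℕ) : landauBound 0 b = b := by
  simp [landauBound]

lemma landauBound_succ (k b : ℕ) : landauBound (k + 1) b = landauBound k ((k + 2) * b ^ 2) := by
  have : ∀ i ∈ Finset.range k,
      (k + 1 + 1 - (i + 1)) ^ 2 ^ (k + 1 - 1 - (i + 1)) = (k + 1 - i) ^ 2 ^ (k - 1 - i) :=
    fun i _ => by rw [show k + 1 + 1 - (i + 1) = k + 1 - i by omega,
      show k + 1 - 1 - (i + 1) = k - 1 - i by omega]
  rw [landauBound, landauBound, Finset.prod_range_succ', Finset.prod_congr rfl this]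
  simp only [Nat.add_sub_cancel, Nat.sub_zero, mul_pow, ← pow_mul, pow_succ]
  ring

lemma landauBound_mono (k : ℕ) : Monotone (landauBound k) := fun _ _ h =>
  Nat.mul_le_mul_right _ (Nat.pow_le_pow_left h _)

lemma succ_mul_le_landauBound (k : ℕ) {b : ℕ} (hb : 0 < b) : (k + 1) * b ≤ landauBound k b := by
  induction k generalizing b with
  | zero => simp [landauBound_zero]
  | succ k ih =>
    rw [landauBound_succ]
    calc (k + 1 + 1) * b ≤ (k + 2) * b ^ 2 := Nat.mul_le_mul_left _ (Nat.le_self_pow two_ne_zero b)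
      _ ≤ (k + 1) * ((k + 2) * b ^ 2) := Nat.le_mul_of_pos_left _ k.succ_pos
      _ ≤ _ := ih (by positivity)

section

variable {ι : Type*}

lemma le_card_mul_of_sum_inv_eq {F : Finset ι} {x : ι → ℕ} (hx : ∀ j ∈ F, 0 < x j) {a : ℤ} {b : ℕ}
    (ha : 0 < a) (hb : 0 < b) (hsum : ∑ j ∈ F, (x j : ℚ)⁻¹ = a / b) {j₀ : ι} (hj₀ : j₀ ∈ F)
    (hmin : ∀ j ∈ F, x j₀ ≤ x j) : x j₀ ≤ F.card * b := by
  have hx₀ : (0 : ℚ) < x j₀ := by exact_mod_cast hx j₀ hj₀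
  have hb' : (0 : ℚ) < b := by exact_mod_cast hb
  have : (1 : ℚ) / b ≤ F.card / x j₀ :=
    calc (1 : ℚ) / b ≤ a / b := div_le_div_of_nonneg_right (by exact_mod_cast ha) hb'.le
      _ = ∑ j ∈ F, (x j : ℚ)⁻¹ := hsum.symm
      _ ≤ F.card • (x j₀ : ℚ)⁻¹ := Finset.sum_le_card_nsmul _ _ _ fun j hj =>
          inv_anti₀ hx₀ (by exact_mod_cast hmin j hj)
      _ = F.card / x j₀ := by rw [nsmul_eq_mul, div_eq_mul_inv]
  rw [div_le_div_iff₀ hb' hx₀, one_mul] at this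
  exact_mod_cast this

theorem le_landauBound_of_sum_inv_eq [DecidableEq ι] (k : ℕ) {F : Finset ι} (hF : F.card = k + 1)
    {x : ι → ℕ} (hx : ∀ j ∈ F, 0 < x j) {a : ℤ} {b : ℕ} (ha : 0 < a) (hb : 0 < b)
    (hsum : ∑ j ∈ F, (x j : ℚ)⁻¹ = a / b) : ∀ j ∈ F, x j ≤ landauBound k b := by
  induction k generalizing F a b with
  | zero =>
    intro j hj
    obtain ⟨j', rfl⟩ := Finset.card_eq_one.1 hF
    rw [Finset.mem_singleton] at hj
    subst hj
    simpa [landauBound_zero] using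
      le_card_mul_of_sum_inv_eq hx ha hb hsum (Finset.mem_singleton_self j) (by simp)
  | succ k ih =>
    intro j hj
    obtain ⟨j₀, hj₀, hmin⟩ := F.exists_min_image x ⟨j, hj⟩
    have hx₀ := le_card_mul_of_sum_inv_eq hx ha hb hsum hj₀ hmin
    rcases eq_or_ne j j₀ with rfl | hne
    · exact hx₀.trans (hF ▸ succ_mul_le_landauBound _ hb)
    have hj' : j ∈ F.erase j₀ := Finset.mem_erase.2 ⟨hne, hj⟩
    have hpos : ∀ i ∈ F.erase j₀, (0 : ℚ) < (x i : ℚ)⁻¹ := fun i hi =>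
      inv_pos.2 (by exact_mod_cast hx i (Finset.mem_of_mem_erase hi))
    have hsum' : ∑ i ∈ F.erase j₀, (x i : ℚ)⁻¹ = ((a * x j₀ - b : ℤ) : ℚ) / (b * x j₀ : ℕ) := by
      have : (x j₀ : ℚ) ≠ 0 := by exact_mod_cast (hx j₀ hj₀).ne'
      rw [eq_sub_of_add_eq' ((Finset.add_sum_erase F _ hj₀).trans hsum)]
      push_cast
      field_simp
    have ha' : 0 < a * x j₀ - b := by
      have := hsum' ▸ Finset.sum_pos hpos ⟨j, hj'⟩
      rw [div_pos_iff_of_pos_right (by have := hx j₀ hj₀; positivity)] at this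
      exact_mod_cast this
    calc x j ≤ landauBound k (b * x j₀) :=
          ih (by rw [Finset.card_erase_of_mem hj₀, hF]; rfl)
            (fun i hi => hx i (Finset.mem_of_mem_erase hi)) ha'
            (Nat.mul_pos hb (hx j₀ hj₀)) hsum' j hj'
      _ ≤ landauBound k ((k + 2) * b ^ 2) := landauBound_mono k (by
          rw [hF] at hx₀; nlinarith)
      _ = landauBound (k + 1) b := (landauBound_succ k b).symm

theorem le_landauBound_of_inv_add_sum_inv_eq (F : Finset ι) {y : ℕ} {x : ι → ℕ} (hy : 0 < y)
    (hx : ∀ j ∈ F, 0 < x j) {a : ℤ} {b : ℕ} (ha : 0 < a) (hb : 0 < b)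
    (hsum : (y : ℚ)⁻¹ + ∑ j ∈ F, (x j : ℚ)⁻¹ = a / b) : y ≤ landauBound F.card b := by
  classical
  refine le_landauBound_of_sum_inv_eq (x := fun j => j.elim y x) F.card (F.card_insertNone)
    ?_ ha hb ?_ none (Finset.mem_insertNone.2 fun _ h => nomatch h)
  · rintro (_ | j) hj
    exacts [hy, hx j (Finset.mem_insertNone.1 hj j rfl)]
  · simpa only [Finset.sum_insertNone, Option.elim_none, Option.elim_some] using hsum

end

open Subgroup

section

variable {G : Type*} [Group G]

lemma Subgroup.two_mul_card_le_card_of_lt {H K : Subgroup G} [Finite K] (h : H < K) :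
    2 * Nat.card H ≤ Nat.card K := by
  obtain ⟨t, ht⟩ := card_dvd_of_le h.le
  have ht₀ : t ≠ 0 := by rintro rfl; simp [Nat.card_pos.ne'] at ht
  have ht₁ : t ≠ 1 := by
    rintro rfl
    exact h.ne (eq_of_le_of_card_ge h.le (by rw [ht, mul_one]))
  rw [ht, mul_comm]
  exact Nat.mul_le_mul_left _ (by omega)

lemma Subgroup.center_lt_centralizer {x : G} (hx : x ∉ center G) : center G < centralizer {x} :=
  SetLike.lt_iff_le_and_exists.2 ⟨fun _ hz => mem_centralizer_singleton_iff.2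
    (mem_center_iff.1 hz x).symm, x, mem_centralizer_singleton_iff.2 rfl, hx⟩

lemma ncard_conjugatesOf_mul_card_centralizer [Finite G] (x : G) :
    (conjugatesOf x).ncard * Nat.card (centralizer {x}) = Nat.card G := by
  have horbit : MulAction.orbit (ConjAct G) x = conjugatesOf x := by
    ext y
    rw [ConjAct.mem_orbit_conjAct, isConj_comm]
    rfl
  rw [← horbit, ← MulAction.index_stabilizer, nat_card_centralizer_nat_card_stabilizer,
    index_mul_card]
  exact Nat.card_congr ConjAct.ofConjAct.toEquiv

def noncentralClasses (N : Subgroup G) : Set (Set G) :=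
  {C : Set G | ∃ x : G, x ∈ N ∧ x ∉ Subgroup.center G ∧ C = conjugatesOf x}

variable {N : Subgroup G}

lemma pairwiseDisjoint_noncentralClasses : (noncentralClasses N).PairwiseDisjoint id := by
  rintro _ ⟨x, -, -, rfl⟩ _ ⟨y, -, -, rfl⟩ hne
  refine Set.disjoint_left.2 fun z (hxz : IsConj x z) (hyz : IsConj y z) => hne ?_
  exact isConj_iff_conjugatesOf_eq.1 (hxz.trans hyz.symm)

lemma sUnion_noncentralClasses [N.Normal] : ⋃₀ noncentralClasses N = (N : Set G) \ center G := by
  ext z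
  constructor
  · rintro ⟨_, ⟨x, hxN, hxZ, rfl⟩, hxz : IsConj x z⟩
    refine ⟨Group.conjugates_subset_normal hxN hxz, fun hzZ => hxZ ?_⟩
    rwa [hxz.eq_of_right_mem_center hzZ]
  · rintro ⟨hzN, hzZ⟩
    exact ⟨_, ⟨z, hzN, hzZ, rfl⟩, mem_conjugatesOf_self⟩

lemma card_eq_card_inf_center_add_sum [Finite G] [N.Normal] :
    Nat.card N = Nat.card (N ⊓ center G : Subgroup G) +
      ∑ C ∈ (noncentralClasses N).toFinite.toFinset, C.ncard := by
  have hunion := (noncentralClasses N).toFinite.ncard_biUnion (fun _ _ => Set.toFinite _)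
    pairwiseDisjoint_noncentralClasses
  simp only [id, ← Set.sUnion_eq_biUnion, sUnion_noncentralClasses] at hunion
  rw [← finsum_mem_eq_finite_toFinset_sum, ← hunion, ← SetLike.coe_sort_coe,
    ← SetLike.coe_sort_coe, Nat.card_coe_set_eq, Nat.card_coe_set_eq, coe_inf,
    Set.ncard_inter_add_ncard_sdiff_eq_ncard]

lemma inv_natCast_eq_div_of_mul_eq {K : Type*} [Field K] [CharZero K] {a b c : ℕ} (h : a * b = c)
    (hc : c ≠ 0) : (a : K)⁻¹ = b / c := by
  subst h
  have hb : (b : K) ≠ 0 := by exact_mod_cast right_ne_zero_of_mul hc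
  rw [Nat.cast_mul, div_mul_cancel_right₀ hb]

variable [Finite G]

lemma ncard_mul_two_mul_card_inf_center_le {C : Set G} (hC : C ∈ noncentralClasses N) :
    C.ncard * (2 * Nat.card (N ⊓ center G : Subgroup G)) ≤ Nat.card G := by
  obtain ⟨x, -, hx, rfl⟩ := hC
  rw [← ncard_conjugatesOf_mul_card_centralizer x]
  exact Nat.mul_le_mul_left _
    (two_mul_card_le_card_of_lt (inf_le_right.trans_lt (center_lt_centralizer hx)))

lemma card_div_ncard_pos {C : Set G} (hC : C ∈ noncentralClasses N) : 0 < Nat.card G / C.ncard := by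
  obtain ⟨x, -, -, rfl⟩ := hC
  exact Nat.div_pos (Set.ncard_le_card _) ((Set.ncard_pos).2 ⟨x, mem_conjugatesOf_self⟩)

variable [N.Normal]

lemma card_inf_center_le_mul_index (h : (noncentralClasses N).Nonempty) :
    Nat.card (N ⊓ center G : Subgroup G) ≤ (noncentralClasses N).ncard * N.index := by
  set z := Nat.card (N ⊓ center G : Subgroup G)
  set F := (noncentralClasses N).toFinite.toFinset
  have hclass := card_eq_card_inf_center_add_sum (N := N)
  have hz : 2 * z ≤ Nat.card N := by
    obtain ⟨_, x, hxN, hx, -⟩ := h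
    exact two_mul_card_le_card_of_lt
      (SetLike.lt_iff_le_and_exists.2 ⟨inf_le_left, x, hxN, fun h => hx (mem_inf.1 h).2⟩)
  have hsum : (∑ C ∈ F, C.ncard) * (2 * z) ≤ F.card * Nat.card G := by
    rw [Finset.sum_mul, ← smul_eq_mul]
    exact Finset.sum_le_card_nsmul _ _ _ fun C hC =>
      ncard_mul_two_mul_card_inf_center_le ((Set.Finite.mem_toFinset _).1 hC)
  rw [← index_mul_card N, ← Set.ncard_eq_toFinset_card _ (Set.toFinite _)] at hsum
  refine Nat.le_of_mul_le_mul_right ?_ (Nat.card_pos (α := N))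
  -- `z ≤ |N| / 2`, so the non-central part `|N| - z` of `N` is at least `|N| / 2`
  calc z * Nat.card N ≤ (∑ C ∈ F, C.ncard) * (2 * z) := by rw [hclass] at hz ⊢; nlinarith
    _ ≤ _ := hsum
    _ = _ := by ring

lemma inv_index_eq_inv_index_inf_center_add_sum :
    (N.index : ℚ)⁻¹ = ((N ⊓ center G).index : ℚ)⁻¹ +
      ∑ C ∈ (noncentralClasses N).toFinite.toFinset, ((Nat.card G / C.ncard : ℕ) : ℚ)⁻¹ := by
  have hG : Nat.card G ≠ 0 := Nat.card_pos.ne'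
  have hterm : ∀ C ∈ (noncentralClasses N).toFinite.toFinset,
      ((Nat.card G / C.ncard : ℕ) : ℚ)⁻¹ = C.ncard / Nat.card G := fun C hC => by
    obtain ⟨x, -, -, rfl⟩ := (Set.Finite.mem_toFinset _).1 hC
    exact inv_natCast_eq_div_of_mul_eq (Nat.div_mul_cancel
      (Dvd.intro _ (ncard_conjugatesOf_mul_card_centralizer x))) hG
  rw [Finset.sum_congr rfl hterm, inv_natCast_eq_div_of_mul_eq (index_mul_card N) hG,
    inv_natCast_eq_div_of_mul_eq (index_mul_card _) hG, ← Finset.sum_div, ← add_div,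
    card_eq_card_inf_center_add_sum]
  push_cast
  rfl

end

theorem card_lt_of_normal_subgroup_noncentral_classes_general
    {G : Type*} [Group G] [Finite G] (N : Subgroup G) (hN : N.Normal)
    (n s : ℕ) (hs : 1 ≤ s) (hidx : N.index = n)
    (hcl : {C : Set G | ∃ x : G, x ∈ N ∧ x ∉ Subgroup.center G ∧ C = conjugatesOf x}.ncard = s) :
    Nat.card G <
      n ^ (2 ^ s + 1) * (s + 1) * ∏ i ∈ Finset.range s, (s + 1 - i) ^ 2 ^ (s - 1 - i) := by
  change (noncentralClasses N).ncard = s at hcl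
  have := hN
  have hn : 0 < n := hidx ▸ Nat.pos_of_ne_zero index_ne_zero_of_finite
  set F := (noncentralClasses N).toFinite.toFinset
  have hF : F.card = s := by rw [← Set.ncard_eq_toFinset_card _, hcl]
  have hz : Nat.card (N ⊓ center G : Subgroup G) ≤ s * n :=
    hcl ▸ hidx ▸ card_inf_center_le_mul_index (Set.nonempty_of_ncard_ne_zero (by omega))
  have hL : (N ⊓ center G).index ≤ landauBound s n :=
    hF ▸ le_landauBound_of_inv_add_sum_inv_eq F (Nat.pos_of_ne_zero index_ne_zero_of_finite)
      (fun C hC => card_div_ncard_pos ((Set.Finite.mem_toFinset _).1 hC)) one_pos hn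
      (by rw [Int.cast_one, one_div, ← hidx]; exact inv_index_eq_inv_index_inf_center_add_sum.symm)
  calc Nat.card G = (N ⊓ center G).index * Nat.card (N ⊓ center G : Subgroup G) :=
        (index_mul_card _).symm
    _ ≤ landauBound s n * (s * n) := Nat.mul_le_mul hL hz
    _ < landauBound s n * ((s + 1) * n) := Nat.mul_lt_mul_of_pos_left (by nlinarith)
        ((Nat.mul_pos s.succ_pos hn).trans_le (succ_mul_le_landauBound s hn))
    _ = _ := by rw [landauBound, pow_succ]; ring

/-- **Theorem A, bound for `|G|`.** If `N ⊴ G` has index `n` and contains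
exactly `s` non-central `G`-conjugacy classes, then
`|G| < n^(2^s + 1) * (s+1) * ∏_{i=0}^{s-1} (s+1-i)^(2^(s-1-i))`. -/
theorem card_lt_of_normal_subgroup_noncentral_classes
    {G : Type*} [Group G] [Finite G] (N : Subgroup G) (hN : N.Normal)
    (n s : ℕ) (hn : 1 ≤ n) (hs : 1 ≤ s) (hidx : N.index = n)
    (hcl : {C : Set G | ∃ x : G, x ∈ N ∧ x ∉ Subgroup.center G ∧ C = conjugatesOf x}.ncard = s) :
    Nat.card G <
      n ^ (2 ^ s + 1) * (s + 1) * ∏ i ∈ Finset.range s, (s + 1 - i) ^ 2 ^ (s - 1 - i) :=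
  card_lt_of_normal_subgroup_noncentral_classes_general N hN n s hs hidx hcl
end

section
/- Let G be a finite solvable group with kpp(G) = k, where kpp(G) is the number of conjugacy classes of G consisting of elements of prime-power order. Then |G| ≤ ∏_{i=0}^{k-1} (k-i)^(2^i). -/
/-!
Induction on `|G|`. A nontrivial finite solvable group has a nontrivial abelian normal
`p`-subgroup `N`: a Sylow subgroup of the last nontrivial term of the derived series. Let `t` be
the number of classes of `G` contained in `N`; they all consist of `p`-elements, and there are at
least two of them. Every prime-power class of `G ⧸ N` lifts to a prime-power class of `G` (lift
into a Sylow subgroup), and only the trivial class of `G ⧸ N` comes from classes inside `N`, so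
`kpp(G ⧸ N) ≤ kpp(G) - t + 1 ≤ kpp(G) - 1`. Since `N` is abelian, each class inside `N` has at
most `|G : N|` elements, so `|N| ≤ t |G : N|` and `|G| ≤ kpp(G) |G : N|²`, which is the recursion
`B(k) = k B(k - 1)²` satisfied by the bound.
-/

open Set Subgroup

def primePowerClasses (G : Type*) [Group G] : Set (Set G) :=
  {C | ∃ x : G, (∃ p m : ℕ, p.Prime ∧ orderOf x = p ^ m) ∧ C = conjugatesOf x}

def kppBound (k : ℕ) : ℕ := ∏ i ∈ Finset.range k, (k - i) ^ 2 ^ i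

theorem kppBound_pos (k : ℕ) : 0 < kppBound k :=
  Finset.prod_pos fun i hi => pow_pos (by simp at hi; omega) _

theorem kppBound_succ (k : ℕ) : kppBound (k + 1) = (k + 1) * kppBound k ^ 2 := by
  rw [kppBound, Finset.prod_range_succ', mul_comm, kppBound, ← Finset.prod_pow]
  simp only [Nat.sub_zero, pow_zero, pow_one, Nat.add_sub_add_right, pow_succ, pow_mul]

theorem kppBound_mono : Monotone kppBound :=
  monotone_nat_of_le_succ fun k => calc
    kppBound k ≤ kppBound k * kppBound k := Nat.le_mul_of_pos_left _ (kppBound_pos k)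
    _ ≤ (k + 1) * kppBound k ^ 2 := by rw [sq]; exact Nat.le_mul_of_pos_left _ k.succ_pos
    _ = kppBound (k + 1) := (kppBound_succ k).symm

section Conjugacy

variable {G : Type*} [Group G]

theorem image_conjugatesOf_of_surjective {Q : Type*} [Group Q] {f : G →* Q}
    (hf : Function.Surjective f) (x : G) : f '' conjugatesOf x = conjugatesOf (f x) := by
  ext y
  simp only [conjugatesOf, mem_image, mem_ofPred_eq, isConj_iff]
  constructor
  · rintro ⟨_, ⟨c, rfl⟩, rfl⟩
    exact ⟨f c, by simp⟩
  · rintro ⟨c, rfl⟩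
    obtain ⟨g, rfl⟩ := hf c
    exact ⟨g * x * g⁻¹, ⟨g, rfl⟩, by simp⟩

theorem ncard_conjugatesOf_eq_index_centralizer (g : G) :
    (conjugatesOf g).ncard = (Subgroup.centralizer {g}).index := by
  rw [centralizer_eq_comap_stabilizer]
  refine Eq.trans ?_ (index_comap_of_surjective _ ConjAct.toConjAct.surjective).symm
  rw [MulAction.index_stabilizer]
  congr 1
  ext h
  exact isConj_comm.trans ConjAct.mem_orbit_conjAct.symm

theorem ncard_conjugatesOf_le_index [Finite G] {N : Subgroup G}
    (hN : N ≤ Subgroup.centralizer N) {g : G} (hg : g ∈ N) : (conjugatesOf g).ncard ≤ N.index := by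
  rw [ncard_conjugatesOf_eq_index_centralizer]
  exact index_antitone (hN.trans (centralizer_le (singleton_subset_iff.mpr hg)))

end Conjugacy

section PrimePowerClasses

variable {G : Type*} [Group G]

theorem conjugatesOf_mem_primePowerClasses {p : ℕ} [Fact p.Prime] {H : Subgroup G}
    (hH : IsPGroup p H) {x : G} (hx : x ∈ H) : conjugatesOf x ∈ primePowerClasses G := by
  obtain ⟨m, hm⟩ := IsPGroup.iff_orderOf.mp hH ⟨x, hx⟩
  exact ⟨x, ⟨p, m, Fact.out, by rwa [orderOf_mk] at hm⟩, rfl⟩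

theorem exists_apply_eq_of_orderOf_eq_prime_pow [Finite G] {Q : Type*} [Group Q] {f : G →* Q}
    (hf : Function.Surjective f) {p m : ℕ} [Fact p.Prime] {x : Q} (hx : orderOf x = p ^ m) :
    ∃ y : G, f y = x ∧ ∃ n : ℕ, orderOf y = p ^ n := by
  obtain ⟨S, hS⟩ := (IsPGroup.of_card ((Nat.card_zpowers x).trans hx)).exists_le_sylow
  obtain ⟨R, rfl⟩ := Sylow.mapSurjective_surjective hf p S
  obtain ⟨y, hyR, rfl⟩ : x ∈ (R : Subgroup G).map f := by
    simpa using hS (mem_zpowers x)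
  obtain ⟨n, hn⟩ := IsPGroup.iff_orderOf.mp R.isPGroup' ⟨y, hyR⟩
  exact ⟨y, rfl, n, by rwa [orderOf_mk] at hn⟩

theorem conjugatesOf_mem_primePowerClasses_subset {p : ℕ} [Fact p.Prime] {N : Subgroup G}
    [N.Normal] (hN : IsPGroup p N) {x : G} (hx : x ∈ N) :
    conjugatesOf x ∈ {C ∈ primePowerClasses G | C ⊆ N} :=
  ⟨conjugatesOf_mem_primePowerClasses hN hx, Group.conjugates_subset_normal hx⟩

variable [Finite G]

theorem ncard_primePowerClasses_quotient_add_le (N : Subgroup G) [N.Normal] :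
    (primePowerClasses (G ⧸ N)).ncard + {C ∈ primePowerClasses G | C ⊆ N}.ncard ≤
      (primePowerClasses G).ncard + 1 := by
  set S := primePowerClasses G
  set T := {C ∈ S | C ⊆ (N : Set G)}
  have hlift : primePowerClasses (G ⧸ N) ⊆
      insert (conjugatesOf 1) (image (QuotientGroup.mk' N) '' (S \ T)) := by
    rintro _ ⟨x, ⟨p, m, hp, hx⟩, rfl⟩
    have := Fact.mk hp
    obtain ⟨y, rfl, n, hy⟩ :=
      exists_apply_eq_of_orderOf_eq_prime_pow (QuotientGroup.mk'_surjective N) hx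
    by_cases hyN : conjugatesOf y ⊆ N
    · left
      rw [show QuotientGroup.mk' N y = 1 from
        (QuotientGroup.eq_one_iff y).mpr (hyN mem_conjugatesOf_self)]
    · right
      exact ⟨conjugatesOf y, ⟨⟨y, ⟨p, n, hp, hy⟩, rfl⟩, fun h => hyN h.2⟩,
        image_conjugatesOf_of_surjective (QuotientGroup.mk'_surjective N) y⟩
  calc _ ≤ (S \ T).ncard + 1 + T.ncard := by
        gcongr
        refine (ncard_le_ncard hlift).trans ((ncard_insert_le _ _).trans ?_)
        gcongr
        exact ncard_image_le (toFinite _)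
    _ = S.ncard + 1 := by rw [add_right_comm, ncard_sdiff_add_ncard_of_subset (sep_subset _ _)]

variable {p : ℕ} [Fact p.Prime] {N : Subgroup G} [N.Normal]

theorem two_le_ncard_primePowerClasses_subset (hN : IsPGroup p N) (hN₁ : N ≠ ⊥) :
    2 ≤ {C ∈ primePowerClasses G | C ⊆ N}.ncard := by
  obtain ⟨x, hx₁⟩ := ne_bot_iff_exists_ne_one.mp hN₁
  have hne : conjugatesOf (1 : G) ≠ conjugatesOf (x : G) := fun h =>
    hx₁ (Subtype.ext (isConj_one_right.mp (isConj_iff_conjugatesOf_eq.mpr h)))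
  rw [← ncard_pair hne]
  refine ncard_le_ncard (pair_subset ?_ ?_)
  · exact conjugatesOf_mem_primePowerClasses_subset hN N.one_mem
  · exact conjugatesOf_mem_primePowerClasses_subset hN x.2

theorem card_le_ncard_primePowerClasses_subset_mul_index (hN : IsPGroup p N)
    (hNab : N ≤ Subgroup.centralizer N) :
    Nat.card N ≤ {C ∈ primePowerClasses G | C ⊆ N}.ncard * N.index := by
  set T := {C ∈ primePowerClasses G | C ⊆ (N : Set G)}
  have hcover : (N : Set G) ⊆ ⋃ C ∈ (toFinite T).toFinset, C := fun x hx =>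
    mem_biUnion ((toFinite T).mem_toFinset.mpr (conjugatesOf_mem_primePowerClasses_subset hN hx))
      mem_conjugatesOf_self
  have hsize : ∀ C ∈ (toFinite T).toFinset, C.ncard ≤ N.index := by
    rintro _ hC
    obtain ⟨⟨x, -, rfl⟩, hxN⟩ := (toFinite T).mem_toFinset.mp hC
    exact ncard_conjugatesOf_le_index hNab (hxN mem_conjugatesOf_self)
  calc Nat.card N = (N : Set G).ncard := (Nat.card_coe_set_eq _).symm
    _ ≤ (⋃ C ∈ (toFinite T).toFinset, C).ncard := ncard_le_ncard hcover
    _ ≤ ∑ C ∈ (toFinite T).toFinset, C.ncard := (toFinite T).toFinset.set_ncard_biUnion_le id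
    _ ≤ (toFinite T).toFinset.card * N.index := Finset.sum_le_card_nsmul _ _ _ hsize
    _ = T.ncard * N.index := by rw [ncard_eq_toFinset_card]

theorem card_le_kppBound_of_quotient (hN : IsPGroup p N) (hN₁ : N ≠ ⊥)
    (hNab : N ≤ Subgroup.centralizer N)
    (hQ : Nat.card (G ⧸ N) ≤ kppBound (primePowerClasses (G ⧸ N)).ncard) :
    Nat.card G ≤ kppBound (primePowerClasses G).ncard := by
  have hcount := ncard_primePowerClasses_quotient_add_le N
  have ht := two_le_ncard_primePowerClasses_subset hN hN₁
  have htk : {C ∈ primePowerClasses G | C ⊆ N}.ncard ≤ (primePowerClasses G).ncard :=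
    ncard_le_ncard (sep_subset _ _)
  have hNcard := card_le_ncard_primePowerClasses_subset_mul_index hN hNab
  obtain ⟨k, hk⟩ : ∃ k, (primePowerClasses G).ncard = k + 1 :=
    ⟨_, (Nat.sub_add_cancel (by omega)).symm⟩
  have hindex : N.index ≤ kppBound k := hQ.trans (kppBound_mono (by omega))
  rw [hk] at htk
  calc Nat.card G = Nat.card N * N.index := N.card_mul_index.symm
    _ ≤ (k + 1) * N.index * N.index := by gcongr; exact hNcard.trans (by gcongr)
    _ ≤ (k + 1) * kppBound k * kppBound k := by gcongr
    _ = kppBound (primePowerClasses G).ncard := by rw [hk, kppBound_succ]; ring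

end PrimePowerClasses

theorem Group.IsSolvable.exists_normal_ne_bot_le_centralizer (G : Type*) [Group G]
    [Nontrivial G] [h : Group.IsSolvable G] :
    ∃ A : Subgroup G, A.Normal ∧ A ≠ ⊥ ∧ A ≤ Subgroup.centralizer A := by
  classical
  have hpos : 0 < Nat.find h.solvable := Nat.pos_of_ne_zero fun h0 =>
    top_ne_bot (α := Subgroup G) (by simpa [h0] using Nat.find_spec h.solvable)
  refine ⟨derivedSeries G (Nat.find h.solvable - 1), derivedSeries_normal _ _,
    Nat.find_min h.solvable (by omega), ?_⟩
  rw [← commutator_eq_bot_iff_le_centralizer, ← derivedSeries_succ, Nat.sub_add_cancel hpos]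
  exact Nat.find_spec h.solvable

theorem exists_normal_isPGroup_le_of_le_centralizer {G : Type*} [Group G] [Finite G]
    {A : Subgroup G} [A.Normal] (hA₁ : A ≠ ⊥) (hAab : A ≤ Subgroup.centralizer A) :
    ∃ p, p.Prime ∧ ∃ N ≤ A, N.Normal ∧ IsPGroup p N ∧ N ≠ ⊥ := by
  have := le_centralizer_iff_isMulCommutative.mp hAab
  have hp : (Nat.card A).minFac.Prime :=
    Nat.minFac_prime ((one_lt_card_iff_ne_bot A).mpr hA₁).ne'
  have := Fact.mk hp
  obtain ⟨P⟩ : Nonempty (Sylow (Nat.card A).minFac A) := inferInstance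
  have := Sylow.characteristic_of_normal P inferInstance
  refine ⟨_, hp, (P : Subgroup A).map A.subtype, map_subtype_le _, inferInstance,
    P.isPGroup'.map _, ?_⟩
  rw [Ne, map_eq_bot_iff_of_injective _ A.subtype_injective]
  exact P.ne_bot_of_dvd_card (Nat.minFac_dvd _)

theorem card_le_kppBound_of_isSolvable (G : Type*) [Group G] [Finite G] [Group.IsSolvable G] :
    Nat.card G ≤ kppBound (primePowerClasses G).ncard := by
  induction h : Nat.card G using Nat.strong_induction_on generalizing G with
  | _ n ih =>
  subst h
  rcases subsingleton_or_nontrivial G with _ | _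
  · rw [Nat.card_of_subsingleton (1 : G)]
    exact kppBound_pos _
  obtain ⟨A, _, hA₁, hAab⟩ := Group.IsSolvable.exists_normal_ne_bot_le_centralizer G
  obtain ⟨p, hp, N, hNA, _, hN, hN₁⟩ := exists_normal_isPGroup_le_of_le_centralizer hA₁ hAab
  have := Fact.mk hp
  have hNab : N ≤ Subgroup.centralizer N := hNA.trans (hAab.trans (centralizer_le hNA))
  refine card_le_kppBound_of_quotient hN hN₁ hNab (ih _ ?_ (G ⧸ N) rfl)
  rw [← N.card_mul_index, ← index_eq_card]
  exact lt_mul_left (Nat.pos_of_ne_zero N.index_ne_zero_of_finite)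
    ((one_lt_card_iff_ne_bot N).mpr hN₁)

/-- **Theorem 4.8, explicit bound.** If `G` is a finite solvable group with
`kpp(G) = k` conjugacy classes of prime-power order elements, then
`|G| ≤ ∏_{i=0}^{k-1} (k-i)^(2^i)`. -/
theorem card_solvable_le_of_primePow_classes
    {G : Type*} [Group G] [Finite G] (hsolv : IsSolvable G) (k : ℕ)
    (hk : {C : Set G | ∃ x : G, (∃ p m : ℕ, p.Prime ∧ orderOf x = p ^ m) ∧
        C = conjugatesOf x}.ncard = k) :
    Nat.card G ≤ ∏ i ∈ Finset.range k, (k - i) ^ 2 ^ i := by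
  have : Group.IsSolvable G := hsolv
  rw [← hk]
  exact card_le_kppBound_of_isSolvable G
end
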